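/- The kernel of A in S(ℝⁿ) is trivial if and only if the kernel of Ã in S(ℝ^{n+k}) is trivial; that is, (Aψ = 0 with ψ ∈ S(ℝⁿ) implies ψ = 0) if and only if (ÃΨ = 0 with Ψ ∈ S(ℝ^{n+k}) implies Ψ = 0). -/

import Mathlib

/-!
If `ÃΨ = 0`, the second intertwining relation gives `A (T*_{Ŝ,χ} Ψ) = 0`, so `T*_{Ŝ,χ} Ψ = 0`
for every `χ`. Choosing for `χ` the slice `y ↦ (ŜΨ)(x, y)` itself turns `(T*_{Ŝ,χ} Ψ)(x) = 0`
into the vanishing of the `L²` norm of that slice, hence `ŜΨ = 0` and `Ψ = 0`.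
Conversely, if `Aψ = 0`, the first relation gives `Ã(Ŝ⁻¹(ψ ⊗ χ)) = 0`, so `ψ ⊗ χ = 0`,
and a single `χ` that does not vanish identically forces `ψ = 0`.
-/

open MeasureTheory Complex SchwartzMap
open scoped ComplexConjugate

namespace SchwartzMap

variable {E F : Type*} [NormedAddCommGroup E] [NormedSpace ℝ E]
  [NormedAddCommGroup F] [NormedSpace ℝ F]

theorem exists_ne_zero [FiniteDimensional ℝ E] : ∃ χ : 𝓢(E, ℂ), χ ≠ 0 := by
  let b : ContDiffBump (0 : E) := ⟨1, 2, one_pos, one_lt_two⟩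
  have hsupp : HasCompactSupport (fun x ↦ (b x : ℂ)) :=
    b.hasCompactSupport.comp_left Complex.ofReal_zero
  refine ⟨hsupp.toSchwartzMap (ofRealCLM.contDiff.comp b.contDiff), fun h ↦ ?_⟩
  have h0 : (b 0 : ℂ) = 0 := congr($h 0)
  simp [b.one_of_mem_closedBall (Metric.mem_closedBall_self b.rIn_pos.le)] at h0

theorem _root_.Function.hasTemperateGrowth_prodMk_left (x : E) :
    Function.HasTemperateGrowth fun y : F ↦ (x, y) := by
  convert (Function.HasTemperateGrowth.const (x, (0 : F))).add
    (ContinuousLinearMap.inr ℝ E F).hasTemperateGrowth using 1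
  ext y <;> simp

variable {V : Type*} [NormedAddCommGroup V] [NormedSpace ℝ V]
  (𝕜 : Type*) [RCLike 𝕜] [NormedSpace 𝕜 V]

noncomputable def sliceCLM (x : E) : 𝓢(E × F, V) →L[𝕜] 𝓢(F, V) :=
  compCLMOfAntilipschitz 𝕜 (Function.hasTemperateGrowth_prodMk_left x) (K := 1)
    (AntilipschitzWith.of_le_mul_dist fun y y' ↦ by simp [Prod.dist_eq])

@[simp]
theorem sliceCLM_apply (x : E) (Φ : 𝓢(E × F, V)) (y : F) : sliceCLM 𝕜 x Φ y = Φ (x, y) := rfl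

variable [FiniteDimensional ℝ F] [MeasureSpace F] [BorelSpace F]
  [(volume : Measure F).HasTemperateGrowth] [(volume : Measure F).IsOpenPosMeasure]

theorem eq_zero_of_integral_conj_mul_self_eq_zero {χ : 𝓢(F, ℂ)}
    (h : ∫ y, conj (χ y) * χ y = 0) : χ = 0 := by
  have hL2 : χ.toLp 2 = 0 := by
    rw [← inner_self_eq_zero (𝕜 := ℂ), inner_toL2_toL2_eq χ χ volume]
    simpa only [RCLike.inner_apply'] using h
  exact injective_toLp 2 volume (hL2.trans (toLpCLM ℂ ℂ 2 volume).map_zero.symm)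

theorem eq_zero_of_forall_integral_conj_mul_eq_zero {Φ : 𝓢(E × F, ℂ)}
    (h : ∀ (χ : 𝓢(F, ℂ)) (x : E), ∫ y, conj (χ y) * Φ (x, y) = 0) : Φ = 0 := by
  have hslice (x : E) : sliceCLM ℂ x Φ = 0 :=
    eq_zero_of_integral_conj_mul_self_eq_zero (h _ x)
  ext ⟨x, y⟩
  exact congr($(hslice x) y)

end SchwartzMap

theorem stmt8 (n k : ℕ)
    -- `Ŝ` : a unitary operator mapping `S(ℝ^{n+k})` into itself, together with `Ŝ⁻¹`
    (Sh : 𝓢((Fin n → ℝ) × (Fin k → ℝ), ℂ) ≃L[ℂ] 𝓢((Fin n → ℝ) × (Fin k → ℝ), ℂ))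
    -- the tensor product `(ψ ⊗ χ)(x,y) = ψ(x)χ(y)` of Schwartz functions
    (tensor : 𝓢(Fin n → ℝ, ℂ) → 𝓢(Fin k → ℝ, ℂ) → 𝓢((Fin n → ℝ) × (Fin k → ℝ), ℂ))
    (htensor : ∀ ψ χ p, tensor ψ χ p = ψ p.1 * χ p.2)
    -- the adjoint intertwiners `T*_{Ŝ,χ}`, mapping `S(ℝ^{n+k})` into `S(ℝⁿ)`:
    (Tstar : 𝓢(Fin k → ℝ, ℂ) → 𝓢((Fin n → ℝ) × (Fin k → ℝ), ℂ) → 𝓢(Fin n → ℝ, ℂ))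
    -- `(T*_{Ŝ,χ}Φ)(x) = ∫ conj(χ(y)) (ŜΦ)(x,y) dy`
    (hTstar : ∀ (χ : 𝓢(Fin k → ℝ, ℂ)) (Φ : 𝓢((Fin n → ℝ) × (Fin k → ℝ), ℂ))
      (x : Fin n → ℝ), Tstar χ Φ x = ∫ y : Fin k → ℝ, conj (χ y) * Sh Φ (x, y))
    (A : 𝓢(Fin n → ℝ, ℂ) →L[ℂ] 𝓢(Fin n → ℝ, ℂ))
    (Atil : 𝓢((Fin n → ℝ) × (Fin k → ℝ), ℂ) →L[ℂ] 𝓢((Fin n → ℝ) × (Fin k → ℝ), ℂ))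
    -- the intertwining relation `Ã ∘ T_{Ŝ,χ} = T_{Ŝ,χ} ∘ A`, where `T_{Ŝ,χ}ψ = Ŝ⁻¹(ψ ⊗ χ)`
    (hint1 : ∀ (χ : 𝓢(Fin k → ℝ, ℂ)) (ψ : 𝓢(Fin n → ℝ, ℂ)),
      Atil (Sh.symm (tensor ψ χ)) = Sh.symm (tensor (A ψ) χ))
    -- the intertwining relation `T*_{Ŝ,χ} ∘ Ã = A ∘ T*_{Ŝ,χ}`
    (hint2 : ∀ (χ : 𝓢(Fin k → ℝ, ℂ)) (Φ : 𝓢((Fin n → ℝ) × (Fin k → ℝ), ℂ)),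
      Tstar χ (Atil Φ) = A (Tstar χ Φ)) :
    (∀ ψ : 𝓢(Fin n → ℝ, ℂ), A ψ = 0 → ψ = 0) ↔
      (∀ Ψ : 𝓢((Fin n → ℝ) × (Fin k → ℝ), ℂ), Atil Ψ = 0 → Ψ = 0) := by
  constructor
  · intro hA Ψ hΨ
    have hTstar_eq_zero (χ : 𝓢(Fin k → ℝ, ℂ)) : Tstar χ Ψ = 0 :=
      hA _ <| by rw [← hint2, hΨ]; ext x; simp [hTstar]
    have hSh : Sh Ψ = 0 := eq_zero_of_forall_integral_conj_mul_eq_zero fun χ x ↦ by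
      rw [← hTstar, hTstar_eq_zero]; rfl
    simpa using hSh
  · intro hAtil ψ hψ
    obtain ⟨χ, y, hy⟩ : ∃ (χ : 𝓢(Fin k → ℝ, ℂ)) (y : Fin k → ℝ), χ y ≠ 0 := by
      obtain ⟨χ, hχ⟩ := exists_ne_zero (E := Fin k → ℝ)
      exact ⟨χ, DFunLike.ne_iff.mp hχ⟩
    have htensor_eq_zero : tensor ψ χ = 0 := by
      have htensor_zero : tensor 0 χ = 0 := by ext; simp [htensor]
      simpa using hAtil (Sh.symm (tensor ψ χ)) (by rw [hint1, hψ, htensor_zero, map_zero])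
    ext x
    simpa [htensor, hy] using congr($htensor_eq_zero (x, y))
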